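/- Let F₄ have positive roots η e_i (1≤i≤4), η(e_i ± e_j) (1≤i<j≤4), and (η/2)(e₁ ± e₂ ± e₃ ± e₄), with short roots (η e_i and the half-sum roots) of multiplicity r and long roots η(e_i±e_j) of multiplicity q, η ≠ 0. Then the 2-form Σ_{β,γ∈R_+} c_β c_γ (β,γ) B_{β,γ}(a,b) β∧γ vanishes for all a,b ∈ R⁴ if and only if 8q² + 6rq + r² = 0, i.e. r = −2q or r = −4q. -/
import Mathlib


open Finset

noncomputable def dotp {N : ℕ} (u v : Fin N → ℝ) : ℝ := ∑ i, u i * v i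

/-- Index type for the positive roots of `F₄`: short roots `η e_i`, long roots
`η(e_i ± e_j)` for `i < j`, and short half-sum roots `(η/2)(e₁ ± e₂ ± e₃ ± e₄)`. -/
abbrev f4Idx := Fin 4 ⊕ (Fin 4 × Fin 4 × Bool) ⊕ (Bool × Bool × Bool)

open Classical in
noncomputable def f4Set : Finset f4Idx :=
  Finset.univ.filter fun t => match t with
    | .inl _ => True
    | .inr (.inl (i, j, _)) => i < j
    | .inr (.inr _) => True

/-- Sign attached to a boolean. -/
noncomputable def sgn (b : Bool) : ℝ := if b then 1 else -1

/-- The positive roots of `F₄` (with parameter `η`). -/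
noncomputable def f4Root (η : ℝ) : f4Idx → Fin 4 → ℝ
  | .inl i => fun k => if k = i then η else 0
  | .inr (.inl (i, j, ε)) => fun k =>
      η * ((if k = i then 1 else 0) + sgn ε * (if k = j then 1 else 0))
  | .inr (.inr (ε₂, ε₃, ε₄)) => fun k =>
      (η / 2) * (![1, sgn ε₂, sgn ε₃, sgn ε₄] k)

/-- Multiplicities: `r` on the short roots, `q` on the long roots. -/
noncomputable def f4Mult (r q : ℝ) : f4Idx → ℝ
  | .inl _ => r
  | .inr (.inl _) => q
  | .inr (.inr _) => r

noncomputable def Wf (η r q : ℝ) (l k : Fin 4) (x : Fin 4 → ℝ) : ℝ :=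
  ∑ t ∈ f4Set, f4Mult r q t * f4Root η t l * f4Root η t k * dotp (f4Root η t) x

noncomputable def Tc (r q : ℝ) : Fin 4 → Fin 4 → Fin 4 → ℝ :=
  ![![![(2*r + 6*q), (0), (0), (0)],
     ![(0), (r + 2*q), (0), (0)],
     ![(0), (0), (r + 2*q), (0)],
     ![(0), (0), (0), (r + 2*q)]],
   ![![(0), (r + 2*q), (0), (0)],
     ![(r + 2*q), (r + 4*q), (0), (0)],
     ![(0), (0), (2*q), (0)],
     ![(0), (0), (0), (2*q)]],
   ![![(0), (0), (r + 2*q), (0)],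
     ![(0), (0), (2*q), (0)],
     ![(r + 2*q), (2*q), (r + 2*q), (0)],
     ![(0), (0), (0), (2*q)]],
   ![![(0), (0), (0), (r + 2*q)],
     ![(0), (0), (0), (2*q)],
     ![(0), (0), (0), (2*q)],
     ![(r + 2*q), (2*q), (2*q), (r)]]]

set_option maxHeartbeats 4000000 in
lemma Wf_eq (η r q : ℝ) (l k : Fin 4) (x : Fin 4 → ℝ) :
    Wf η r q l k x = η^3 * ∑ m, Tc r q l k m * x m := by
  fin_cases l <;> fin_cases k <;>
  · simp only [Wf, Tc, f4Set, Finset.sum_filter, Fintype.sum_sum_type, Fintype.sum_prod_type,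
      Fin.sum_univ_four, Fintype.sum_bool, dotp, f4Root, f4Mult, sgn,
      Matrix.cons_val_zero, Matrix.cons_val_one, Matrix.head_cons,
      Matrix.cons_val_two, Matrix.tail_cons, Matrix.cons_val_three, Matrix.cons_val_fin_one,
      Fin.isValue, Fin.zero_eta, Fin.mk_one, Fin.reduceFinMk,
      show ((0:Fin 4) < 1) = True by decide, show ((0:Fin 4) < 2) = True by decide,
      show ((0:Fin 4) < 3) = True by decide, show ((1:Fin 4) < 2) = True by decide,
      show ((1:Fin 4) < 3) = True by decide, show ((2:Fin 4) < 3) = True by decide,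
      show ((0:Fin 4) < 0) = False by decide, show ((1:Fin 4) < 0) = False by decide,
      show ((1:Fin 4) < 1) = False by decide, show ((2:Fin 4) < 0) = False by decide,
      show ((2:Fin 4) < 1) = False by decide, show ((2:Fin 4) < 2) = False by decide,
      show ((3:Fin 4) < 0) = False by decide, show ((3:Fin 4) < 1) = False by decide,
      show ((3:Fin 4) < 2) = False by decide, show ((3:Fin 4) < 3) = False by decide,
      show ((0:Fin 4) = 1) = False by decide, show ((0:Fin 4) = 2) = False by decide,
      show ((0:Fin 4) = 3) = False by decide, show ((1:Fin 4) = 0) = False by decide,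
      show ((1:Fin 4) = 2) = False by decide, show ((1:Fin 4) = 3) = False by decide,
      show ((2:Fin 4) = 0) = False by decide, show ((2:Fin 4) = 1) = False by decide,
      show ((2:Fin 4) = 3) = False by decide, show ((3:Fin 4) = 0) = False by decide,
      show ((3:Fin 4) = 1) = False by decide, show ((3:Fin 4) = 2) = False by decide,
      show (false = true) = False by decide, show (true = true) = True by decide,
      if_true, if_false, ite_true, ite_false]
    ring

lemma expand_term (i j : Fin 4) (β γ : Fin 4 → ℝ) (mt mu Pa Pb Qa Qb : ℝ) :
    mt * mu * dotp β γ * (Pa * Qb - Pb * Qa) * (β i * γ j - β j * γ i)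
    = ∑ l : Fin 4, (mt * β l * β i * Pa * (mu * γ l * γ j * Qb)
        + mt * β l * β j * Pb * (mu * γ l * γ i * Qa)
        - mt * β l * β i * Pb * (mu * γ l * γ j * Qa)
        - mt * β l * β j * Pa * (mu * γ l * γ i * Qb)) := by
  rw [show dotp β γ = ∑ l : Fin 4, β l * γ l from rfl]
  simp only [Finset.mul_sum, Finset.sum_mul]
  exact Finset.sum_congr rfl fun l _ => by ring

lemma structure_eq (η r q : ℝ) (a b : Fin 4 → ℝ) (i j : Fin 4) :
    ∑ t ∈ f4Set, ∑ u ∈ f4Set,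
        f4Mult r q t * f4Mult r q u * dotp (f4Root η t) (f4Root η u) *
          (dotp (f4Root η t) a * dotp (f4Root η u) b -
            dotp (f4Root η t) b * dotp (f4Root η u) a) *
          (f4Root η t i * f4Root η u j - f4Root η t j * f4Root η u i)
    = ∑ l : Fin 4, 2 * (Wf η r q l i a * Wf η r q l j b - Wf η r q l j a * Wf η r q l i b) := by
  have h1 : ∀ t ∈ f4Set, ∀ u ∈ f4Set, True := fun _ _ _ _ => trivial
  calc
    _ = ∑ t ∈ f4Set, ∑ u ∈ f4Set, ∑ l : Fin 4,
          (f4Mult r q t * f4Root η t l * f4Root η t i * dotp (f4Root η t) a *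
              (f4Mult r q u * f4Root η u l * f4Root η u j * dotp (f4Root η u) b)
            + f4Mult r q t * f4Root η t l * f4Root η t j * dotp (f4Root η t) b *
              (f4Mult r q u * f4Root η u l * f4Root η u i * dotp (f4Root η u) a)
            - f4Mult r q t * f4Root η t l * f4Root η t i * dotp (f4Root η t) b *
              (f4Mult r q u * f4Root η u l * f4Root η u j * dotp (f4Root η u) a)
            - f4Mult r q t * f4Root η t l * f4Root η t j * dotp (f4Root η t) a *
              (f4Mult r q u * f4Root η u l * f4Root η u i * dotp (f4Root η u) b)) := by
        exact Finset.sum_congr rfl fun t _ => Finset.sum_congr rfl fun u _ =>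
          expand_term i j (f4Root η t) (f4Root η u) _ _ _ _ _ _
    _ = ∑ t ∈ f4Set, ∑ l : Fin 4, ∑ u ∈ f4Set,
          (f4Mult r q t * f4Root η t l * f4Root η t i * dotp (f4Root η t) a *
              (f4Mult r q u * f4Root η u l * f4Root η u j * dotp (f4Root η u) b)
            + f4Mult r q t * f4Root η t l * f4Root η t j * dotp (f4Root η t) b *
              (f4Mult r q u * f4Root η u l * f4Root η u i * dotp (f4Root η u) a)
            - f4Mult r q t * f4Root η t l * f4Root η t i * dotp (f4Root η t) b *
              (f4Mult r q u * f4Root η u l * f4Root η u j * dotp (f4Root η u) a)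
            - f4Mult r q t * f4Root η t l * f4Root η t j * dotp (f4Root η t) a *
              (f4Mult r q u * f4Root η u l * f4Root η u i * dotp (f4Root η u) b)) :=
        Finset.sum_congr rfl fun t _ => Finset.sum_comm
    _ = ∑ l : Fin 4, ∑ t ∈ f4Set, ∑ u ∈ f4Set,
          (f4Mult r q t * f4Root η t l * f4Root η t i * dotp (f4Root η t) a *
              (f4Mult r q u * f4Root η u l * f4Root η u j * dotp (f4Root η u) b)
            + f4Mult r q t * f4Root η t l * f4Root η t j * dotp (f4Root η t) b *
              (f4Mult r q u * f4Root η u l * f4Root η u i * dotp (f4Root η u) a)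
            - f4Mult r q t * f4Root η t l * f4Root η t i * dotp (f4Root η t) b *
              (f4Mult r q u * f4Root η u l * f4Root η u j * dotp (f4Root η u) a)
            - f4Mult r q t * f4Root η t l * f4Root η t j * dotp (f4Root η t) a *
              (f4Mult r q u * f4Root η u l * f4Root η u i * dotp (f4Root η u) b)) := Finset.sum_comm
    _ = _ := by
        refine Finset.sum_congr rfl fun l _ => ?_
        simp only [Finset.sum_add_distrib, Finset.sum_sub_distrib,
          ← Finset.sum_mul, ← Finset.mul_sum]
        rw [show (∑ t ∈ f4Set, f4Mult r q t * f4Root η t l * f4Root η t i * dotp (f4Root η t) a) = Wf η r q l i a from rfl,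
            show (∑ t ∈ f4Set, f4Mult r q t * f4Root η t l * f4Root η t j * dotp (f4Root η t) b) = Wf η r q l j b from rfl,
            show (∑ t ∈ f4Set, f4Mult r q t * f4Root η t l * f4Root η t i * dotp (f4Root η t) b) = Wf η r q l i b from rfl,
            show (∑ t ∈ f4Set, f4Mult r q t * f4Root η t l * f4Root η t j * dotp (f4Root η t) a) = Wf η r q l j a from rfl]
        ring


set_option maxHeartbeats 4000000 in
lemma f4_key (η r q : ℝ) (a b : Fin 4 → ℝ) (i j : Fin 4) :
    ∑ t ∈ f4Set, ∑ u ∈ f4Set,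
        f4Mult r q t * f4Mult r q u * dotp (f4Root η t) (f4Root η u) *
          (dotp (f4Root η t) a * dotp (f4Root η u) b -
            dotp (f4Root η t) b * dotp (f4Root η u) a) *
          (f4Root η t i * f4Root η u j - f4Root η t j * f4Root η u i)
    = 2 * (8*q^2 + 6*r*q + r^2) * η^6 * (a i * b j - a j * b i) := by
  rw [structure_eq]
  simp only [Wf_eq]
  fin_cases i <;> fin_cases j <;>
  · simp only [Tc, Fin.sum_univ_four, Matrix.cons_val_zero, Matrix.cons_val_one,
      Matrix.head_cons, Matrix.cons_val_two, Matrix.tail_cons, Matrix.cons_val_three,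
      Fin.isValue, Fin.zero_eta, Fin.mk_one, Fin.reduceFinMk]
    ring

/-- The `F₄` 2-form `Σ_{β,γ∈R_+} c_β c_γ (β,γ) B_{β,γ}(a,b) β∧γ` vanishes for all
`a, b ∈ ℝ⁴` iff `8q² + 6rq + r² = 0`, i.e. `r = −2q` or `r = −4q`. -/
theorem stmt10 (η r q : ℝ) (hη : η ≠ 0) :
    (∀ a b : Fin 4 → ℝ, ∀ i j : Fin 4,
        ∑ t ∈ f4Set, ∑ u ∈ f4Set,
          f4Mult r q t * f4Mult r q u * dotp (f4Root η t) (f4Root η u) *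
            (dotp (f4Root η t) a * dotp (f4Root η u) b -
              dotp (f4Root η t) b * dotp (f4Root η u) a) *
            (f4Root η t i * f4Root η u j - f4Root η t j * f4Root η u i) = 0)
      ↔ (r = -2 * q ∨ r = -4 * q) := by
  constructor
  · intro h
    have h1 := h ![1,0,0,0] ![0,1,0,0] 0 1
    rw [f4_key] at h1
    simp only [Matrix.cons_val_zero, Matrix.cons_val_one, Matrix.head_cons] at h1
    have h6 : η ^ 6 ≠ 0 := pow_ne_zero _ hη
    have hne : (2:ℝ) * η ^ 6 ≠ 0 := mul_ne_zero two_ne_zero h6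
    have h2 : (r + 2*q) * (r + 4*q) = 0 := by
      apply mul_left_cancel₀ hne
      rw [mul_zero]
      linear_combination h1
    rcases mul_eq_zero.mp h2 with h3 | h3
    · exact Or.inl (by linarith)
    · exact Or.inr (by linarith)
  · intro h a b i j
    rw [f4_key]
    rcases h with h | h <;> rw [h] <;> ring
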